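/- arXiv:1403.5459 — 5 statements merged into one kernel-verified Lean document; each statement's English description precedes it below -/
import Mathlib

section
/- If a compact set S in ℝ^d is ρ,h-cone-convex (i.e., for every boundary point x there exists an open finite cone with vertex x, opening angle ρ and height h contained in the complement of S), then the Lebesgue measure of the boundary of S is zero. -/
/-!
At a boundary point `x` of `S`, cone-convexity puts, for every `0 < r ≤ h`, a ball of radius
`a r` (with `a > 0` depending only on `ρ`) inside `closedBall x r` and outside `S`. Hence the
density of `S` at `x` is at most `1 - a ^ d < 1`. By the Lebesgue density theorem almost every
point of `S` has density `1`, so the boundary, which lies in `S` since `S` is closed, is null.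
-/

open MeasureTheory Metric Set Filter

noncomputable section

/-- The open finite cone with vertex `x`, axis `ξ`, opening angle `ρ` and height `h`. -/
def fcone (d : ℕ) (ρ h : ℝ) (x ξ : EuclideanSpace ℝ (Fin d)) :
    Set (EuclideanSpace ℝ (Fin d)) :=
  {z | z ≠ x ∧ (inner ℝ ξ (‖z - x‖⁻¹ • (z - x)) : ℝ) > Real.cos (ρ / 2)} ∩ Metric.ball x h

/-- `S` is `ρ,h`-cone-convex. -/
def ConeConvex (d : ℕ) (ρ h : ℝ) (S : Set (EuclideanSpace ℝ (Fin d))) : Prop :=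
  ∀ x ∈ frontier S, ∃ ξ : EuclideanSpace ℝ (Fin d), ‖ξ‖ = 1 ∧ fcone d ρ h x ξ ⊆ Sᶜ

/-- The `ρ,h`-cone-convex hull by complement. -/
def cccHull (d : ℕ) (ρ h : ℝ) (S : Set (EuclideanSpace ℝ (Fin d))) :
    Set (EuclideanSpace ℝ (Fin d)) :=
  ⋂₀ {A | ∃ y ξ : EuclideanSpace ℝ (Fin d),
      ‖ξ‖ = 1 ∧ fcone d ρ h y ξ ∩ S = ∅ ∧ A = (fcone d ρ h y ξ)ᶜ}

/-- The `ρ,h`-cone-convex hull: intersection of all compact `ρ,h`-cone-convex supersets. -/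
def ccHull (d : ℕ) (ρ h : ℝ) (S : Set (EuclideanSpace ℝ (Fin d))) :
    Set (EuclideanSpace ℝ (Fin d)) :=
  ⋂₀ {B | S ⊆ B ∧ IsCompact B ∧ B.Nonempty ∧ ConeConvex d ρ h B}

end

open scoped Topology RealInnerProductSpace

section Density

variable {α : Type*} [MetricSpace α] [MeasurableSpace α] [BorelSpace α]
  [SecondCountableTopology α] [HasBesicovitchCovering α]

theorem measure_eq_zero_of_not_tendsto_density (μ : Measure α) [IsLocallyFiniteMeasure μ]
    {s t : Set α} (hts : t ⊆ s)
    (ht : ∀ x ∈ t, ¬Tendsto (fun r => μ (s ∩ closedBall x r) / μ (closedBall x r))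
      (𝓝[>] 0) (𝓝 1)) :
    μ t = 0 := by
  have hnull : μ.restrict s t = 0 :=
    measure_mono_null ht (ae_iff.1 (Besicovitch.ae_tendsto_measure_inter_div μ s))
  rw [← inter_eq_self_of_subset_left hts]
  exact nonpos_iff_eq_zero.1 (hnull ▸ Measure.le_restrict_apply s t)

end Density

section AddHaar

variable {E : Type*} [NormedAddCommGroup E] [NormedSpace ℝ E] [MeasurableSpace E]
  [BorelSpace E] [FiniteDimensional ℝ E] (μ : Measure E) [μ.IsAddHaarMeasure]

theorem measure_inter_closedBall_div_le_of_disjoint_ball {s : Set E} {x y : E} {a r : ℝ}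
    (ha : 0 < a) (hr : 0 < r) (hball : ball y (a * r) ⊆ closedBall x r)
    (hdisj : Disjoint s (ball y (a * r))) :
    μ (s ∩ closedBall x r) / μ (closedBall x r)
      ≤ 1 - ENNReal.ofReal (a ^ Module.finrank ℝ E) := by
  set θ := ENNReal.ofReal (a ^ Module.finrank ℝ E)
  have hvol : μ (ball y (a * r)) = θ * μ (closedBall x r) := by
    rw [μ.addHaar_ball_of_pos y (mul_pos ha hr), μ.addHaar_closedBall x hr.le, mul_pow,
      ENNReal.ofReal_mul (by positivity), mul_assoc]
  have hfin : μ (closedBall x r) ≠ ⊤ := measure_closedBall_lt_top.ne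
  have hadd : μ (s ∩ closedBall x r) + θ * μ (closedBall x r) ≤ μ (closedBall x r) := by
    rw [← hvol, ← measure_union (hdisj.mono_left inter_subset_left) measurableSet_ball]
    exact measure_mono (union_subset inter_subset_right hball)
  refine ENNReal.div_le_of_le_mul ?_
  rw [ENNReal.sub_mul fun _ _ => hfin, one_mul]
  exact ENNReal.le_sub_of_add_le_right (ENNReal.mul_ne_top ENNReal.ofReal_ne_top hfin) hadd

theorem not_tendsto_density_of_eventually_disjoint_ball {s : Set E} {x : E} {a : ℝ} (ha : 0 < a)
    (h : ∀ᶠ r in 𝓝[>] 0, ∃ y, ball y (a * r) ⊆ closedBall x r ∧ Disjoint s (ball y (a * r))) :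
    ¬Tendsto (fun r => μ (s ∩ closedBall x r) / μ (closedBall x r)) (𝓝[>] 0) (𝓝 1) := by
  intro hlim
  have hlt : 1 - ENNReal.ofReal (a ^ Module.finrank ℝ E) < 1 :=
    ENNReal.sub_lt_self ENNReal.one_ne_top one_ne_zero (by simp [ha])
  obtain ⟨r, hr_big, hr_pos, y, hball, hdisj⟩ :=
    ((hlim.eventually (lt_mem_nhds hlt)).and (eventually_mem_nhdsWithin.and h)).exists
  exact (measure_inter_closedBall_div_le_of_disjoint_ball μ ha hr_pos hball hdisj).not_gt hr_big

end AddHaar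

section Cone

theorem sub_dist_le_inner_sub {F : Type*} [NormedAddCommGroup F] [InnerProductSpace ℝ F]
    {ξ : F} (hξ : ‖ξ‖ = 1) (x z : F) (t : ℝ) :
    t - dist z (x + t • ξ) ≤ ⟪ξ, z - x⟫ := by
  have hsplit : ⟪ξ, z - x⟫ = t + ⟪ξ, z - (x + t • ξ)⟫ := by
    rw [show z - x = t • ξ + (z - (x + t • ξ)) by abel, inner_add_right, real_inner_smul_right,
      real_inner_self_eq_norm_sq, hξ]
    ring
  have hcs : -dist z (x + t • ξ) ≤ ⟪ξ, z - (x + t • ξ)⟫ := by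
    have := real_inner_le_norm ξ (-(z - (x + t • ξ)))
    rw [inner_neg_right, norm_neg, hξ, one_mul, ← dist_eq_norm] at this
    linarith
  linarith

variable {d : ℕ} {ρ h : ℝ}

theorem mem_fcone_of_lt_inner {x ξ z : EuclideanSpace ℝ (Fin d)} (hzx : dist z x < h)
    (hz : Real.cos (ρ / 2) * ‖z - x‖ < ⟪ξ, z - x⟫) :
    z ∈ fcone d ρ h x ξ := by
  have hne : z ≠ x := by
    rintro rfl
    simp at hz
  have hpos : 0 < ‖z - x‖ := norm_pos_iff.2 (sub_ne_zero_of_ne hne)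
  refine ⟨⟨hne, ?_⟩, hzx⟩
  rw [real_inner_smul_right, gt_iff_lt, ← div_eq_inv_mul, lt_div_iff₀ hpos]
  exact hz

theorem ball_subset_fcone_inter_ball {r : ℝ} (hr : 0 < r) (hrh : r ≤ h)
    (x : EuclideanSpace ℝ (Fin d)) {ξ : EuclideanSpace ℝ (Fin d)} (hξ : ‖ξ‖ = 1) :
    ball (x + (r / 2) • ξ) ((1 - Real.cos (ρ / 2)) / 8 * r) ⊆ fcone d ρ h x ξ ∩ ball x r := by
  intro z hz
  set c := Real.cos (ρ / 2)
  have hc1 : c ≤ 1 := Real.cos_le_one _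
  have hc2 : -1 ≤ c := Real.neg_one_le_cos _
  have hδ : dist z (x + (r / 2) • ξ) < (1 - c) / 8 * r := hz
  have hnorm : ‖z - x‖ ≤ dist z (x + (r / 2) • ξ) + r / 2 := by
    rw [← dist_eq_norm]
    calc dist z x ≤ dist z (x + (r / 2) • ξ) + dist (x + (r / 2) • ξ) x := dist_triangle _ _ _
      _ = _ := by
        rw [dist_self_add_left, norm_smul, hξ, mul_one, Real.norm_of_nonneg (by positivity),
          dist_eq_norm]
  have hinner := sub_dist_le_inner_sub hξ x z (r / 2)
  have hzx : dist z x < r := by rw [dist_eq_norm]; nlinarith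
  have hangle : c * ‖z - x‖ < ⟪ξ, z - x⟫ := by
    rcases le_or_gt 0 c with hc | hc
    · nlinarith [mul_le_mul_of_nonneg_left hnorm hc,
        mul_lt_mul_of_pos_left hδ (by linarith : 0 < 1 + c), mul_nonneg (sub_nonneg.2 hc1) hr.le]
    · -- an obtuse half-angle only asks for a positive inner product
      nlinarith [norm_nonneg (z - x)]
  exact ⟨mem_fcone_of_lt_inner (hzx.trans_le hrh) hangle, hzx⟩

end Cone

theorem stmt_0 {d : ℕ} {ρ h : ℝ} (hρ : ρ ∈ Set.Ioc 0 Real.pi) (hh : 0 < h)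
    (S : Set (EuclideanSpace ℝ (Fin d))) (hS : IsCompact S)
    (hcc : ConeConvex d ρ h S) :
    volume (frontier S) = 0 := by
  have hcos : Real.cos (ρ / 2) < 1 := by
    simpa using Real.cos_lt_cos_of_nonneg_of_le_pi le_rfl (by linarith [hρ.2, Real.pi_pos])
      (half_pos hρ.1)
  refine measure_eq_zero_of_not_tendsto_density volume hS.isClosed.frontier_subset
    fun x hx => ?_
  obtain ⟨ξ, hξ, hcone⟩ := hcc x hx
  refine not_tendsto_density_of_eventually_disjoint_ball volume
    (a := (1 - Real.cos (ρ / 2)) / 8) (by linarith) ?_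
  filter_upwards [Ioc_mem_nhdsGT hh] with r ⟨hr, hrh⟩
  have hsub := ball_subset_fcone_inter_ball (ρ := ρ) hr hrh x hξ
  exact ⟨x + (r / 2) • ξ, fun z hz => ball_subset_closedBall (hsub hz).2,
    subset_compl_iff_disjoint_left.1 fun z hz => hcone (hsub hz).1⟩
end

section
/- For every boundary point x of a compact ρ,h-cone-convex set S and every radius r < h, there exists a constant k < 1 depending only on ρ and h (in fact one may take k = 1 − μ(C ∩ B(0,1))/μ(B(0,1)) where C is any cone of opening angle ρ) such that μ(S ∩ B(x,r)) ≤ k·μ(B(x,r)). -/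
/-!
At a boundary point `x`, cone-convexity removes from `B(x, r)` the cone of height `r` at `x`,
which is `x + r • C` for the cone `C` of height `1` at the origin. Translations and the dilation
by `r` multiply the volumes of the ball and of the cone by the same factor `r ^ d`, and a
reflection carrying one axis to another preserves the volume of `C`, so the removed fraction
`μ C / μ (B(0, 1))` depends on `ρ` alone.
-/

open MeasureTheory Metric Set Filter

noncomputable section

open Pointwise ENNReal

theorem ENNReal.ofReal_one_sub_toReal {x : ℝ≥0∞} (hx : x ≠ ⊤) :
    ENNReal.ofReal (1 - x.toReal) = 1 - x := by
  rw [ENNReal.ofReal_sub _ ENNReal.toReal_nonneg, ENNReal.ofReal_one, ENNReal.ofReal_toReal hx]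

theorem MeasureTheory.Measure.addHaar_ball_diff_vadd_smul {E : Type*} [NormedAddCommGroup E]
    [NormedSpace ℝ E] [MeasurableSpace E] [BorelSpace E] [FiniteDimensional ℝ E] (μ : Measure E)
    [μ.IsAddHaarMeasure] {A : Set E} (hA : MeasurableSet A) (hA₁ : A ⊆ ball 0 1) (x : E) {r : ℝ}
    (hr : 0 < r) :
    μ (ball x r \ (x +ᵥ r • A)) = (1 - μ A / μ (ball 0 1)) * μ (ball x r) := by
  have hsub : x +ᵥ r • A ⊆ ball x r := by
    rw [← vadd_ball_zero, ← smul_unitBall_of_pos hr]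
    exact vadd_set_mono (smul_set_mono hA₁)
  have hB₀ : μ (ball 0 1) ≠ 0 := (measure_ball_pos μ 0 one_pos).ne'
  have hB : μ (ball (0 : E) 1) ≠ ⊤ := measure_ball_lt_top.ne
  rw [measure_sdiff hsub ((hA.const_smul₀ r).const_vadd x).nullMeasurableSet
      (measure_ne_top_of_subset hsub measure_ball_lt_top.ne),
    measure_vadd, Measure.addHaar_smul_of_nonneg μ hr.le, Measure.addHaar_ball_of_pos μ x hr,
    ← ENNReal.mul_sub fun _ _ => ENNReal.ofReal_ne_top, mul_left_comm,
    ENNReal.sub_mul fun _ _ => hB, ENNReal.div_mul_cancel hB₀ hB, one_mul]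

section Cone

variable {d : ℕ}

theorem isOpen_fcone (ρ h : ℝ) (x ξ : EuclideanSpace ℝ (Fin d)) : IsOpen (fcone d ρ h x ξ) := by
  refine IsOpen.inter ?_ isOpen_ball
  have hcont : ContinuousOn (fun z => inner ℝ ξ (‖z - x‖⁻¹ • (z - x))) {z | z ≠ x} :=
    continuousOn_const.inner <| ((continuous_sub_right x).norm.continuousOn.inv₀
      fun z hz => norm_ne_zero_iff.2 (sub_ne_zero.2 hz)).smul (continuous_sub_right x).continuousOn
  exact hcont.isOpen_inter_preimage isOpen_ne isOpen_Ioi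

theorem fcone_subset_ball (ρ h : ℝ) (x ξ : EuclideanSpace ℝ (Fin d)) :
    fcone d ρ h x ξ ⊆ ball x h :=
  inter_subset_right

theorem fcone_eq_vadd_smul (ρ : ℝ) {r : ℝ} (hr : 0 < r) (x ξ : EuclideanSpace ℝ (Fin d)) :
    fcone d ρ r x ξ = x +ᵥ r • fcone d ρ 1 0 ξ := by
  ext z
  obtain ⟨w, rfl⟩ : ∃ w, z = x + r • w := ⟨r⁻¹ • (z - x), by simp [smul_smul, hr.ne']⟩
  simp [fcone, mem_vadd_set, smul_mem_smul_set_iff₀ hr.ne', hr.ne', norm_smul, abs_of_pos hr,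
    mul_lt_iff_lt_one_right hr, smul_smul]

theorem preimage_fcone_zero (ρ h : ℝ)
    (f : EuclideanSpace ℝ (Fin d) ≃ₗᵢ[ℝ] EuclideanSpace ℝ (Fin d)) (ξ : EuclideanSpace ℝ (Fin d)) :
    f ⁻¹' fcone d ρ h 0 (f ξ) = fcone d ρ h 0 ξ := by
  ext z
  simp only [fcone, mem_preimage, mem_inter_iff, mem_ofPred_eq, mem_ball_zero_iff, sub_zero,
    LinearIsometryEquiv.norm_map, ne_eq, LinearIsometryEquiv.map_eq_zero_iff]
  rw [← f.map_smul, f.inner_map_map]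

theorem volume_fcone_zero_eq_of_norm_eq (ρ h : ℝ) {ξ₁ ξ₂ : EuclideanSpace ℝ (Fin d)}
    (hξ : ‖ξ₁‖ = ‖ξ₂‖) : volume (fcone d ρ h 0 ξ₁) = volume (fcone d ρ h 0 ξ₂) := by
  let f := (ℝ ∙ (ξ₁ - ξ₂))ᗮ.reflection
  have hf : f ξ₁ = ξ₂ := Submodule.reflection_sub hξ
  rw [← preimage_fcone_zero ρ h f ξ₁, hf]
  exact f.measurePreserving.measure_preimage (isOpen_fcone ρ h 0 ξ₂).nullMeasurableSet

theorem volume_fcone_pos {ρ h : ℝ} (hρ : Real.cos (ρ / 2) < 1) (hh : 0 < h)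
    (x : EuclideanSpace ℝ (Fin d)) {ξ : EuclideanSpace ℝ (Fin d)} (hξ : ‖ξ‖ = 1) : 0 < volume (fcone d ρ h x ξ) := by
  have hξ₀ : ξ ≠ 0 := norm_ne_zero_iff.1 (by simp [hξ])
  refine (isOpen_fcone ρ h x ξ).measure_pos volume ⟨x + (h / 2) • ξ, ?_, ?_⟩
  · simp [hξ₀, hh.ne', norm_smul, abs_of_pos hh, smul_smul, hξ, hρ]
  · simp [norm_smul, hξ, abs_of_pos hh, hh]

theorem volume_inter_ball_le_of_mem_frontier {ρ h r : ℝ} {S : Set (EuclideanSpace ℝ (Fin d))}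
    (hS : ConeConvex d ρ h S) {x : EuclideanSpace ℝ (Fin d)} (hx : x ∈ frontier S) (hr : 0 < r)
    (hrh : r ≤ h) {ξ₀ : EuclideanSpace ℝ (Fin d)} (hξ₀ : ‖ξ₀‖ = 1) :
    volume (S ∩ ball x r) ≤
      (1 - volume (fcone d ρ 1 0 ξ₀) / volume (ball (0 : EuclideanSpace ℝ (Fin d)) 1)) *
        volume (ball x r) := by
  obtain ⟨ξ, hξ, hcone⟩ := hS x hx
  have hsub : S ∩ ball x r ⊆ ball x r \ fcone d ρ r x ξ := fun z ⟨hzS, hz⟩ =>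
    ⟨hz, fun hzc => hcone ⟨hzc.1, ball_subset_ball hrh hzc.2⟩ hzS⟩
  calc volume (S ∩ ball x r) ≤ volume (ball x r \ fcone d ρ r x ξ) := measure_mono hsub
    _ = _ := by
      rw [fcone_eq_vadd_smul ρ hr, Measure.addHaar_ball_diff_vadd_smul volume
          (isOpen_fcone ρ 1 0 ξ).measurableSet (fcone_subset_ball ρ 1 0 ξ) x hr,
        volume_fcone_zero_eq_of_norm_eq ρ 1 (hξ.trans hξ₀.symm)]

end Cone

theorem stmt_1_general {d : ℕ} {ρ h : ℝ} (hρ : ρ ∈ Set.Ioc 0 Real.pi)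
    (S : Set (EuclideanSpace ℝ (Fin d)))
    (hcc : ConeConvex d ρ h S) :
    ∃ k : ℝ, 0 ≤ k ∧ k < 1 ∧
      (∀ ξ : EuclideanSpace ℝ (Fin d), ‖ξ‖ = 1 →
        k = 1 - (volume (fcone d ρ 1 0 ξ ∩ Metric.ball 0 1)).toReal /
              (volume (Metric.ball (0 : EuclideanSpace ℝ (Fin d)) 1)).toReal) ∧
      ∀ x ∈ frontier S, ∀ r : ℝ, 0 < r → r < h →
        volume (S ∩ Metric.ball x r) ≤ ENNReal.ofReal k * volume (Metric.ball x r) := by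
  rcases subsingleton_or_nontrivial (EuclideanSpace ℝ (Fin d)) with hE | hE
  · refine ⟨0, le_rfl, one_pos, fun ξ hξ => ?_, fun x hx => ?_⟩
    · simp [Subsingleton.elim ξ 0] at hξ
    · rcases S.eq_empty_or_nonempty with rfl | hS
      · simp at hx
      · simp [hS.eq_univ] at hx
  obtain ⟨ξ₀, hξ₀⟩ := exists_norm_eq (EuclideanSpace ℝ (Fin d)) zero_le_one
  have hcos : Real.cos (ρ / 2) < 1 := by
    simpa using Real.cos_lt_cos_of_nonneg_of_le_pi le_rfl (by linarith [hρ.2, Real.pi_pos])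
      (half_pos hρ.1)
  set q := volume (fcone d ρ 1 0 ξ₀) / volume (ball (0 : EuclideanSpace ℝ (Fin d)) 1)
  have hq₀ : 0 < q := ENNReal.div_pos (volume_fcone_pos hcos one_pos 0 hξ₀).ne'
    measure_ball_lt_top.ne
  have hq₁ : q ≤ 1 := ENNReal.div_le_of_le_mul <| by
    rw [one_mul]; exact measure_mono (fcone_subset_ball ρ 1 0 ξ₀)
  have hq : q ≠ ⊤ := ne_top_of_le_ne_top ENNReal.one_ne_top hq₁
  have hq_toReal : q.toReal ≤ 1 := by simpa using ENNReal.toReal_mono ENNReal.one_ne_top hq₁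
  refine ⟨1 - q.toReal, by linarith, by linarith [ENNReal.toReal_pos hq₀.ne' hq],
    fun ξ hξ => ?_, fun x hx r hr hrh => ?_⟩
  · rw [inter_eq_left.2 (fcone_subset_ball ρ 1 0 ξ), volume_fcone_zero_eq_of_norm_eq ρ 1
      (hξ.trans hξ₀.symm), ← ENNReal.toReal_div]
  · rw [ENNReal.ofReal_one_sub_toReal hq]
    exact volume_inter_ball_le_of_mem_frontier hcc hx hr hrh.le hξ₀

theorem stmt_1 {d : ℕ} {ρ h : ℝ} (hρ : ρ ∈ Set.Ioc 0 Real.pi) (hh : 0 < h)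
    (S : Set (EuclideanSpace ℝ (Fin d))) (hS : IsCompact S)
    (hcc : ConeConvex d ρ h S) :
    ∃ k : ℝ, 0 ≤ k ∧ k < 1 ∧
      (∀ ξ : EuclideanSpace ℝ (Fin d), ‖ξ‖ = 1 →
        k = 1 - (volume (fcone d ρ 1 0 ξ ∩ Metric.ball 0 1)).toReal /
              (volume (Metric.ball (0 : EuclideanSpace ℝ (Fin d)) 1)).toReal) ∧
      ∀ x ∈ frontier S, ∀ r : ℝ, 0 < r → r < h →
        volume (S ∩ Metric.ball x r) ≤ ENNReal.ofReal k * volume (Metric.ball x r) :=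
  stmt_1_general hρ S hcc
end
end

section
/- The ρ,h-cone-convex hull of a bounded set S, defined as the intersection of all compact ρ,h-cone-convex sets containing S, is itself ρ,h-cone-convex (provided at least one compact ρ,h-cone-convex set contains S). -/
/-!
Cone-convexity is preserved by arbitrary intersections. If `x` is a frontier point of
`H = ⋂₀ 𝒞`, a small ball around `x` meets some `B ∈ 𝒞` and leaves it, so by connectedness it
contains a frontier point `y` of `B`; the cone at `y` avoids `B`, hence `H`. Letting the ball
shrink and passing to a subsequence along which the unit axes converge, these cones converge to
a cone at `x`, and every point of the limit cone lies in the approximating cones eventually, so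
it avoids `H` as well.
-/

open MeasureTheory Metric Set Filter
open Topology

noncomputable section

theorem IsPreconnected.inter_frontier_nonempty {X : Type*} [TopologicalSpace X] {s t : Set X}
    (hs : IsPreconnected s) (hst : (s ∩ t).Nonempty) (hs_t : (s \ t).Nonempty) :
    (s ∩ frontier t).Nonempty := by
  by_contra hempty
  have hcover : s ⊆ interior t ∪ interior tᶜ := by
    rw [← compl_frontier_eq_union_interior]
    exact fun z hz hzt => hempty ⟨z, hz, hzt⟩
  have hdisj : Disjoint (interior t) (interior tᶜ) :=
    disjoint_compl_right.mono interior_subset interior_subset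
  rcases hs.subset_or_subset isOpen_interior isOpen_interior hdisj hcover with hsub | hsub
  · obtain ⟨a, has, hat⟩ := hs_t
    exact hat (interior_subset (hsub has))
  · obtain ⟨a, has, hat⟩ := hst
    exact interior_subset (hsub has) hat

section Cones

variable {d : ℕ} {ρ h : ℝ}

theorem eventually_mem_fcone {ι : Type*} {l : Filter ι} {y ξ : ι → EuclideanSpace ℝ (Fin d)}
    {x ζ z : EuclideanSpace ℝ (Fin d)} (hy : Tendsto y l (𝓝 x)) (hξ : Tendsto ξ l (𝓝 ζ))
    (hz : z ∈ fcone d ρ h x ζ) : ∀ᶠ i in l, z ∈ fcone d ρ h (y i) (ξ i) := by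
  obtain ⟨⟨hzx, hcos⟩, hzball⟩ := hz
  have hdiff : Tendsto (fun i => z - y i) l (𝓝 (z - x)) := tendsto_const_nhds.sub hy
  have hdir : Tendsto (fun i => ‖z - y i‖⁻¹ • (z - y i)) l (𝓝 (‖z - x‖⁻¹ • (z - x))) :=
    (hdiff.norm.inv₀ (norm_ne_zero_iff.mpr (sub_ne_zero.mpr hzx))).smul hdiff
  filter_upwards [hy.eventually_ne hzx.symm, (hξ.inner hdir).eventually_const_lt hcos,
    (tendsto_const_nhds.dist hy).eventually_lt_const hzball] with i hne hcos' hdist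
  exact ⟨⟨hne.symm, hcos'⟩, hdist⟩

theorem ConeConvex.of_forall_exists_fcone_near {T : Set (EuclideanSpace ℝ (Fin d))}
    (hT : ∀ x ∈ frontier T, ∀ ε > 0, ∃ y ξ : EuclideanSpace ℝ (Fin d),
      ‖ξ‖ = 1 ∧ dist y x < ε ∧ fcone d ρ h y ξ ⊆ Tᶜ) :
    ConeConvex d ρ h T := by
  intro x hx
  choose y ξ hξ hdist hcone using fun n : ℕ => hT x hx (1 / (n + 1)) Nat.one_div_pos_of_nat
  have hy : Tendsto y atTop (𝓝 x) :=
    tendsto_iff_dist_tendsto_zero.mpr <| squeeze_zero (fun _ => dist_nonneg)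
      (fun n => (hdist n).le) tendsto_one_div_add_atTop_nhds_zero_nat
  obtain ⟨ζ, hζ, φ, hφ, hξφ⟩ := (isCompact_sphere (0 : EuclideanSpace ℝ (Fin d)) 1).tendsto_subseq
    (x := ξ) fun n => mem_sphere_zero_iff_norm.mpr (hξ n)
  refine ⟨ζ, mem_sphere_zero_iff_norm.mp hζ, fun z hz => ?_⟩
  obtain ⟨n, hn⟩ := (eventually_mem_fcone (hy.comp hφ.tendsto_atTop) hξφ hz).exists
  exact hcone (φ n) hn

theorem exists_fcone_near_of_mem_frontier_sInter {𝒞 : Set (Set (EuclideanSpace ℝ (Fin d)))}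
    (h𝒞 : ∀ B ∈ 𝒞, ConeConvex d ρ h B) {x : EuclideanSpace ℝ (Fin d)}
    (hx : x ∈ frontier (⋂₀ 𝒞)) {ε : ℝ} (hε : 0 < ε) :
    ∃ y ξ : EuclideanSpace ℝ (Fin d), ‖ξ‖ = 1 ∧ dist y x < ε ∧ fcone d ρ h y ξ ⊆ (⋂₀ 𝒞)ᶜ := by
  have hball : ¬ ball x ε ⊆ ⋂₀ 𝒞 := fun hsub =>
    hx.2 (mem_interior_iff_mem_nhds.mpr (mem_of_superset (ball_mem_nhds x hε) hsub))
  obtain ⟨w, hw, hwH⟩ := not_subset.mp hball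
  obtain ⟨B, hB, hwB⟩ : ∃ B ∈ 𝒞, w ∉ B := by simpa [mem_sInter] using hwH
  have hxB : x ∈ closure B := closure_mono (sInter_subset_of_mem hB) hx.1
  obtain ⟨y, hy, hyB⟩ := isPreconnected_ball.inter_frontier_nonempty
    (_root_.mem_closure_iff.mp hxB _ isOpen_ball (mem_ball_self hε)) ⟨w, hw, hwB⟩
  obtain ⟨ξ, hξ, hcone⟩ := h𝒞 B hB y hyB
  exact ⟨y, ξ, hξ, mem_ball.mp hy, hcone.trans (compl_subset_compl.mpr (sInter_subset_of_mem hB))⟩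

theorem ConeConvex.sInter {𝒞 : Set (Set (EuclideanSpace ℝ (Fin d)))}
    (h𝒞 : ∀ B ∈ 𝒞, ConeConvex d ρ h B) : ConeConvex d ρ h (⋂₀ 𝒞) :=
  ConeConvex.of_forall_exists_fcone_near fun _ hx _ hε =>
    exists_fcone_near_of_mem_frontier_sInter h𝒞 hx hε

end Cones

theorem stmt_4_general {d : ℕ} {ρ h : ℝ}
    (S : Set (EuclideanSpace ℝ (Fin d))) :
    ConeConvex d ρ h (ccHull d ρ h S) :=
  ConeConvex.sInter fun _ hB => hB.2.2.2

theorem stmt_4 {d : ℕ} {ρ h : ℝ} (hρ : ρ ∈ Set.Ioc 0 Real.pi) (hh : 0 < h)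
    (S : Set (EuclideanSpace ℝ (Fin d))) (hSb : Bornology.IsBounded S)
    (hex : ∃ B : Set (EuclideanSpace ℝ (Fin d)),
      S ⊆ B ∧ IsCompact B ∧ B.Nonempty ∧ ConeConvex d ρ h B) :
    ConeConvex d ρ h (ccHull d ρ h S) :=
  stmt_4_general S
end
end

section
/- Let P be an absolutely continuous probability on ℝ^d with compact ρ,h-cone-convex support S, and let X_1,…,X_n be i.i.d. with law P, ℵ_n = {X_1,…,X_n}. Then the Hausdorff distance d_H(ℂ_{ρ,h}(ℵ_n), S) between the ρ,h-cone-convex hull of the sample and S converges to 0 almost surely. -/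
open MeasureTheory Metric Set Filter

noncomputable section

/-!
Almost surely every sample point lies in `S`, and `S` is itself a compact cone-convex superset of
the sample, so `ℵ_n ⊆ ℂ_{ρ,h}(ℵ_n) ⊆ S` and `d_H(ℂ_{ρ,h}(ℵ_n), S)` is at most the largest distance
from a point of `S` to the sample. Every basic open set meeting the support has positive
probability, hence is almost surely hit by some `X_i`; so the sample is a.s. dense in `S`, and
compactness of `S` makes finitely many sample points cover `S` up to any `ε`.
-/

section Sampling

variable {Ω E : Type*} [MeasurableSpace Ω] [MeasurableSpace E] {μ : Measure Ω} {P : Measure E}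
  {X : ℕ → Ω → E}

lemma ae_exists_mem_of_iIndepFun [IsProbabilityMeasure P] (hmeas : ∀ i, Measurable (X i))
    (hindep : ProbabilityTheory.iIndepFun X μ) (hlaw : ∀ i, μ.map (X i) = P) {B : Set E}
    (hB : MeasurableSet B) (hpos : 0 < P B) :
    ∀ᵐ ω ∂μ, ∃ i, X i ω ∈ B := by
  have hlawB : ∀ i, μ (X i ⁻¹' Bᶜ) = P Bᶜ := fun i => by
    rw [← hlaw i, Measure.map_apply (hmeas i) hB.compl]
  have hmiss : ∀ n : ℕ, μ (⋂ i, X i ⁻¹' Bᶜ) ≤ P Bᶜ ^ n := fun n =>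
    calc μ (⋂ i, X i ⁻¹' Bᶜ)
        ≤ μ (⋂ i ∈ Finset.range n, X i ⁻¹' Bᶜ) :=
          measure_mono fun ω hω => mem_iInter₂.2 fun i _ => mem_iInter.1 hω i
      _ = ∏ i ∈ Finset.range n, μ (X i ⁻¹' Bᶜ) :=
          hindep.measure_inter_preimage_eq_mul _ fun _ _ => hB.compl
      _ = P Bᶜ ^ n := by simp only [hlawB, Finset.prod_const, Finset.card_range]
  have hlt : P Bᶜ < 1 := by
    rw [prob_compl_eq_one_sub hB]
    exact ENNReal.sub_lt_self ENNReal.one_ne_top one_ne_zero hpos.ne'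
  have hnull : μ (⋂ i, X i ⁻¹' Bᶜ) = 0 :=
    le_antisymm (ge_of_tendsto' (ENNReal.tendsto_pow_atTop_nhds_zero_of_lt_one hlt) hmiss) bot_le
  exact ae_iff.2 <| measure_mono_null (fun ω hω => mem_iInter.2 fun i hi => hω ⟨i, hi⟩) hnull

lemma ae_support_subset_closure_range [TopologicalSpace E] [SecondCountableTopology E]
    [OpensMeasurableSpace E] [IsProbabilityMeasure P] (hmeas : ∀ i, Measurable (X i))
    (hindep : ProbabilityTheory.iIndepFun X μ) (hlaw : ∀ i, μ.map (X i) = P) :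
    ∀ᵐ ω ∂μ, P.support ⊆ closure (range fun i => X i ω) := by
  have hbasis := TopologicalSpace.isBasis_countableBasis E
  have hhit : ∀ᵐ ω ∂μ, ∀ U ∈ TopologicalSpace.countableBasis E,
      (U ∩ P.support).Nonempty → ∃ i, X i ω ∈ U := by
    rw [ae_ball_iff (TopologicalSpace.countable_countableBasis E)]
    intro U hU
    by_cases hmeets : (U ∩ P.support).Nonempty
    · obtain ⟨x, hxU, hx⟩ := hmeets
      have hpos : 0 < P U :=
        (Measure.mem_support_iff_forall x).1 hx U ((hbasis.isOpen hU).mem_nhds hxU)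
      filter_upwards [ae_exists_mem_of_iIndepFun hmeas hindep hlaw
        (hbasis.isOpen hU).measurableSet hpos] with ω hω _ using hω
    · exact ae_of_all _ fun _ h => absurd h hmeets
  filter_upwards [hhit] with ω hω x hx
  rw [hbasis.mem_closure_iff]
  intro U hU hxU
  obtain ⟨i, hi⟩ := hω U hU ⟨x, hxU, hx⟩
  exact ⟨X i ω, hi, mem_range_self i⟩

end Sampling

lemma tendsto_hausdorffDist_of_subset_closure_range {E : Type*} [PseudoMetricSpace E]
    {S : Set E} {x : ℕ → E} {A : ℕ → Set E} (hS : IsCompact S)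
    (hdense : S ⊆ closure (range x)) (hAS : ∀ n, A n ⊆ S) (hxA : ∀ n, x '' Iio n ⊆ A n) :
    Tendsto (fun n => hausdorffDist (A n) S) atTop (nhds 0) := by
  rw [Metric.tendsto_atTop]
  intro ε hε
  obtain ⟨t, hcover⟩ := hS.elim_finite_subcover (fun i => ball (x i) (ε / 2))
    (fun _ => isOpen_ball) fun s hs => by
      obtain ⟨i, hi⟩ := Metric.mem_closure_range_iff.1 (hdense hs) (ε / 2) (by positivity)
      exact mem_iUnion.2 ⟨i, hi⟩
  refine ⟨t.sup id + 1, fun n hn => ?_⟩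
  have hdist : hausdorffDist (A n) S ≤ ε / 2 := by
    refine hausdorffDist_le_of_mem_dist (by positivity)
      (fun a ha => ⟨a, hAS n ha, by simp only [dist_self]; positivity⟩) fun s hs => ?_
    obtain ⟨i, hi, hsi⟩ := mem_iUnion₂.1 (hcover hs)
    have hin : i < n := by have := Finset.le_sup (f := id) hi; simp only [id] at this; omega
    exact ⟨x i, hxA n ⟨i, hin, rfl⟩, (mem_ball.1 hsi).le⟩
  rw [Real.dist_eq, sub_zero, abs_of_nonneg hausdorffDist_nonneg]
  linarith

lemma subset_ccHull (d : ℕ) (ρ h : ℝ) (T : Set (EuclideanSpace ℝ (Fin d))) :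
    T ⊆ ccHull d ρ h T :=
  fun _ hx => mem_sInter.2 fun _ hB => hB.1 hx

lemma ccHull_subset {d : ℕ} {ρ h : ℝ} {T S : Set (EuclideanSpace ℝ (Fin d))} (hTS : T ⊆ S)
    (hS : IsCompact S) (hne : S.Nonempty) (hcc : ConeConvex d ρ h S) :
    ccHull d ρ h T ⊆ S :=
  sInter_subset_of_mem ⟨hTS, hS, hne, hcc⟩

theorem stmt_11_general {d : ℕ} {ρ h : ℝ}
    (P : Measure (EuclideanSpace ℝ (Fin d))) [IsProbabilityMeasure P]
    (S : Set (EuclideanSpace ℝ (Fin d)))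
    (hsupp : ∀ x, x ∈ S ↔ ∀ r : ℝ, 0 < r → 0 < P (Metric.ball x r))
    (hS : IsCompact S) (hcc : ConeConvex d ρ h S)
    (Ω : Type) [MeasureSpace Ω]
    (X : ℕ → Ω → EuclideanSpace ℝ (Fin d))
    (hmeas : ∀ i, Measurable (X i))
    (hindep : ProbabilityTheory.iIndepFun X volume)
    (hlaw : ∀ i, Measure.map (X i) volume = P) :
    ∀ᵐ ω ∂(volume : Measure Ω),
      Tendsto (fun n : ℕ =>
          Metric.hausdorffDist (ccHull d ρ h ((fun i => X i ω) '' {i | i < n})) S)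
        atTop (nhds 0) := by
  have hS_eq : S = P.support :=
    Set.ext fun x => (hsupp x).trans nhds_basis_ball.mem_measureSupport.symm
  have hS_ne : S.Nonempty := hS_eq ▸ Measure.nonempty_support (IsProbabilityMeasure.ne_zero P)
  have hsample : ∀ᵐ ω ∂(volume : Measure Ω), ∀ i, X i ω ∈ S :=
    ae_all_iff.2 fun i => ae_of_ae_map (hmeas i).aemeasurable
      (by rw [hlaw i, hS_eq]; exact Measure.support_mem_ae)
  filter_upwards [hsample, ae_support_subset_closure_range hmeas hindep hlaw] with ω hω hdense
  refine tendsto_hausdorffDist_of_subset_closure_range hS (hS_eq ▸ hdense)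
    (fun n => ccHull_subset ?_ hS hS_ne hcc) fun n => subset_ccHull d ρ h _
  rintro _ ⟨i, _, rfl⟩
  exact hω i

theorem stmt_11 {d : ℕ} {ρ h : ℝ} (hρ : ρ ∈ Set.Ioc 0 Real.pi) (hh : 0 < h)
    (P : Measure (EuclideanSpace ℝ (Fin d))) [IsProbabilityMeasure P]
    (hac : P ≪ volume)
    (S : Set (EuclideanSpace ℝ (Fin d)))
    (hsupp : ∀ x, x ∈ S ↔ ∀ r : ℝ, 0 < r → 0 < P (Metric.ball x r))
    (hS : IsCompact S) (hcc : ConeConvex d ρ h S)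
    (Ω : Type) [MeasureSpace Ω] [IsProbabilityMeasure (volume : Measure Ω)]
    (X : ℕ → Ω → EuclideanSpace ℝ (Fin d))
    (hmeas : ∀ i, Measurable (X i))
    (hindep : ProbabilityTheory.iIndepFun X volume)
    (hlaw : ∀ i, Measure.map (X i) volume = P) :
    ∀ᵐ ω ∂(volume : Measure Ω),
      Tendsto (fun n : ℕ =>
          Metric.hausdorffDist (ccHull d ρ h ((fun i => X i ω) '' {i | i < n})) S)
        atTop (nhds 0) :=
  stmt_11_general P S hsupp hS hcc Ω X hmeas hindep hlaw
end
end

section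
/- Let S ∈ C_{ρ,h} be compact, let ℵ_n ⊂ S be a finite set with ε_n = d_H(ℵ_n, S), and set k = 3 + 2/sin(ρ/2). If 2ε_n/sin(ρ/2) < h/2, then the inner parallel set S ⊖ kε_n B(0,1) = {x ∈ S : B(x, kε_n) ⊂ S} is contained in the ρ,h-cone-convex hull ℂ_{ρ,h}(ℵ_n). -/
/-
Let `B` be a compact cone-convex superset of `ℵ_n` and suppose a deep point `x` of `S` lies
outside `B`. Its nearest point `y ∈ B` lies on the frontier of `B` within `ε` of `x`, so some cone
of `B`'s complement has vertex `y`. Going a distance `t = 2ε / sin(ρ/2)` along its axis gives a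
point `z` whose `2ε`-ball fits in the cone; `z` is within `t + ε ≤ kε` of `x`, hence `z ∈ S`,
hence some point of `ℵ_n ⊆ B` lies within `2ε > ε` of `z`, i.e. in the cone: a contradiction.
-/

open MeasureTheory Metric Set Filter

noncomputable section

theorem cos_mul_norm_lt_inner_smul_add {E : Type*} [NormedAddCommGroup E]
    [InnerProductSpace ℝ E] {ξ u : E} {t θ : ℝ} (hξ : ‖ξ‖ = 1) (ht : 0 ≤ t)
    (hu : ‖u‖ < t * Real.sin θ) :
    Real.cos θ * ‖t • ξ + u‖ < inner ℝ ξ (t • ξ + u) := by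
  set σ := Real.sin θ
  set c := Real.cos θ
  set s : ℝ := inner ℝ ξ u
  have hpyth : σ ^ 2 + c ^ 2 = 1 := Real.sin_sq_add_cos_sq θ
  have hσ1 : σ ≤ 1 := Real.sin_le_one θ
  have hs : |s| ≤ ‖u‖ := by
    simpa [hξ] using abs_real_inner_le_norm ξ u
  have hinner : inner ℝ ξ (t • ξ + u) = t + s := by
    rw [inner_add_right, real_inner_smul_right, real_inner_self_eq_norm_sq, hξ]; ring
  have hnorm : ‖t • ξ + u‖ ^ 2 = t ^ 2 + 2 * t * s + ‖u‖ ^ 2 := by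
    rw [norm_add_sq_real, norm_smul, real_inner_smul_left, hξ, Real.norm_eq_abs, abs_of_nonneg ht]
    ring
  obtain ⟨hs₁, -⟩ := abs_le.1 hs
  have hpos : 0 < t + s := by nlinarith [norm_nonneg u]
  have hgap : 0 < (t * σ) ^ 2 - ‖u‖ ^ 2 := by nlinarith [norm_nonneg u]
  have hsq : (c * ‖t • ξ + u‖) ^ 2 < (t + s) ^ 2 := by
    have key : (t + s) ^ 2 - (c * ‖t • ξ + u‖) ^ 2
        = (s + σ ^ 2 * t) ^ 2 + c ^ 2 * ((t * σ) ^ 2 - ‖u‖ ^ 2) := by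
      rw [mul_pow, hnorm]; linear_combination -(t ^ 2 + 2 * t * s + σ ^ 2 * t ^ 2) * hpyth
    rcases eq_or_ne c 0 with hc | hc
    · have hσ : σ ^ 2 = 1 := by simpa [hc] using hpyth
      rw [hc, hσ] at key
      nlinarith
    · nlinarith [sq_nonneg (s + σ ^ 2 * t), mul_pos (sq_pos_of_ne_zero hc) hgap]
  rw [hinner]
  exact (le_abs_self _).trans_lt (abs_lt_of_sq_lt_sq hsq hpos.le)

theorem ball_subset_fcone {d : ℕ} {ρ h t r : ℝ} {x ξ : EuclideanSpace ℝ (Fin d)} (hξ : ‖ξ‖ = 1)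
    (ht : 0 ≤ t) (hr : r ≤ t * Real.sin (ρ / 2)) (hth : t + r ≤ h) :
    ball (x + t • ξ) r ⊆ fcone d ρ h x ξ := by
  intro z hz
  have hzx : z - x = t • ξ + (z - (x + t • ξ)) := by abel
  have hu : ‖z - (x + t • ξ)‖ < r := by rwa [← dist_eq_norm]
  have hcone := cos_mul_norm_lt_inner_smul_add hξ ht (hu.trans_le hr)
  rw [← hzx] at hcone
  have hne : z ≠ x := by
    rintro rfl
    simp at hcone
  refine ⟨⟨hne, ?_⟩, ?_⟩
  · have hpos : 0 < ‖z - x‖ := norm_pos_iff.2 (sub_ne_zero.2 hne)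
    rw [real_inner_smul_right, gt_iff_lt, ← div_eq_inv_mul, lt_div_iff₀ hpos]
    exact hcone
  · calc dist z x = ‖t • ξ + (z - (x + t • ξ))‖ := by rw [dist_eq_norm, hzx]
      _ ≤ t + ‖z - (x + t • ξ)‖ := by
        grw [norm_add_le, norm_smul, hξ, Real.norm_eq_abs, abs_of_nonneg ht, mul_one]
      _ < h := by linarith

theorem ConeConvex.exists_ball_subset_compl {d : ℕ} {ρ h t r : ℝ}
    {B : Set (EuclideanSpace ℝ (Fin d))} (hB : ConeConvex d ρ h B) (hBne : B.Nonempty)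
    {x : EuclideanSpace ℝ (Fin d)} (hx : x ∉ B) (ht : 0 ≤ t) (hr : r ≤ t * Real.sin (ρ / 2))
    (hth : t + r ≤ h) :
    ∃ z, dist z x ≤ t + infDist x B ∧ ball z r ⊆ Bᶜ := by
  obtain ⟨y, hy, hxy⟩ := exists_mem_frontier_infDist_compl_eq_dist (s := Bᶜ) hx
    (compl_ne_univ.2 hBne)
  rw [frontier_compl] at hy
  rw [compl_compl] at hxy
  obtain ⟨ξ, hξ, hcone⟩ := hB y hy
  refine ⟨y + t • ξ, ?_, (ball_subset_fcone hξ ht hr hth).trans hcone⟩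
  calc dist (y + t • ξ) x ≤ dist (y + t • ξ) y + dist y x := dist_triangle _ _ _
    _ = t + infDist x B := by
      rw [dist_self_add_left, norm_smul, hξ, Real.norm_eq_abs, abs_of_nonneg ht, mul_one,
        hxy, dist_comm]

theorem stmt_13_general {d : ℕ} {ρ h : ℝ} (hρ : ρ ∈ Set.Ioc 0 Real.pi)
    (S A : Set (EuclideanSpace ℝ (Fin d))) (hS : IsCompact S)
    (hA : A.Finite) (hAne : A.Nonempty)
    (ε : ℝ) (hε : ε = Metric.hausdorffDist A S)
    (hsmall : 2 * ε / Real.sin (ρ / 2) < h / 2) :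
    {x ∈ S | Metric.closedBall x ((3 + 2 / Real.sin (ρ / 2)) * ε) ⊆ S} ⊆
      ccHull d ρ h A := by
  rintro x ⟨hxS, hball⟩ B ⟨hAB, hBc, hBne, hBcc⟩
  by_contra hxB
  have hfin : hausdorffEDist A S ≠ ⊤ :=
    hausdorffEDist_ne_top_of_nonempty_of_bounded hAne ⟨x, hxS⟩ hA.isBounded hS.isBounded
  have hxB_le : infDist x B ≤ ε := by
    refine (infDist_le_infDist_of_subset hAB hAne).trans ?_
    rw [hε, hausdorffDist_comm]
    exact infDist_le_hausdorffDist_of_mem hxS (by rwa [hausdorffEDist_comm])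
  have hε0 : 0 < ε := ((hBc.isClosed.notMem_iff_infDist_pos hBne).1 hxB).trans_le hxB_le
  have hσ : 0 < Real.sin (ρ / 2) :=
    Real.sin_pos_of_pos_of_lt_pi (by linarith [hρ.1]) (by linarith [hρ.2, Real.pi_pos])
  set t := 2 * ε / Real.sin (ρ / 2) with ht
  have hσt : 2 * ε ≤ t := le_div_self (by positivity) hσ (Real.sin_le_one _)
  have htσ : t * Real.sin (ρ / 2) = 2 * ε := div_mul_cancel₀ _ hσ.ne'
  obtain ⟨z, hzx, hzB⟩ :=
    hBcc.exists_ball_subset_compl hBne hxB (by positivity) htσ.ge (by linarith : t + 2 * ε ≤ h)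
  have hzS : z ∈ S := hball <| mem_closedBall.2 <| by
    have hk : (3 + 2 / Real.sin (ρ / 2)) * ε = 3 * ε + t := by rw [ht]; ring
    linarith
  obtain ⟨a, haA, haz⟩ :=
    exists_dist_lt_of_hausdorffDist_lt' hzS (show hausdorffDist A S < 2 * ε by linarith) hfin
  exact hzB haz (hAB haA)

theorem stmt_13 {d : ℕ} {ρ h : ℝ} (hρ : ρ ∈ Set.Ioc 0 Real.pi) (hh : 0 < h)
    (S A : Set (EuclideanSpace ℝ (Fin d))) (hS : IsCompact S)
    (hcc : ConeConvex d ρ h S) (hA : A.Finite) (hAne : A.Nonempty) (hAS : A ⊆ S)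
    (ε : ℝ) (hε : ε = Metric.hausdorffDist A S)
    (hsmall : 2 * ε / Real.sin (ρ / 2) < h / 2) :
    {x ∈ S | Metric.closedBall x ((3 + 2 / Real.sin (ρ / 2)) * ε) ⊆ S} ⊆
      ccHull d ρ h A :=
  stmt_13_general hρ S A hS hA hAne ε hε hsmall
end
end
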